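/- The sets M_{i,j} for i ∈ [d] and j ∈ [N/d] form a matching decomposition of K_{n_1,…,n_k}: each M_{i,j} consists of n_1 edges, no two of which agree in any coordinate, and every element of ∏_{i=1}^k (Z_{m_i} × Z_{n_i/m_i}) belongs to exactly one of the sets M_{i,j}. -/
import Mathlib


/-- `⟨x*⟩`: the edge of `K_{n_1,…,n_k}` (with edge set `∏ l, Z_{m l} × Z_{n l / m l}`)
whose `l`-th entry is `(x_{l,1}, x_{l,2})`, where `x = x_{l,1}·(n l / m l) + x_{l,2}`
with `x_{l,1} ∈ [m l]` and `x_{l,2} ∈ [n l / m l]`. -/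
def xStar (k : ℕ) (n m : Fin k → ℕ) (x : ℕ) :
    ∀ l : Fin k, ZMod (m l) × ZMod (n l / m l) :=
  fun l => (((x / (n l / m l) : ℕ) : ZMod (m l)), ((x : ℕ) : ZMod (n l / m l)))

/-- `⟨(i,j)⟩`: the edge whose first entry is `(0,0)` and whose `l`-th entry
(`l ≥ 1`) is `(i_l, j_l)`, the `l`-th mixed-radix digits of `i` in base
`(m 1, …, m (k-1))` and of `j` in base `(n 1 / m 1, …, n (k-1) / m (k-1))`. -/
def baseEdge (k : ℕ) (n m : Fin k → ℕ) (i j : ℕ) :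
    ∀ l : Fin k, ZMod (m l) × ZMod (n l / m l) :=
  fun l =>
    if (l : ℕ) = 0 then (0, 0)
    else (((i / ∏ h ∈ Finset.univ.filter (fun h : Fin k => l < h), m h : ℕ) : ZMod (m l)),
          ((j / ∏ h ∈ Finset.univ.filter (fun h : Fin k => l < h), (n h / m h) : ℕ) :
            ZMod (n l / m l)))

/-- `M_{i,j} = { ⟨x*⟩ + ⟨(i,j)⟩ : x ∈ [n1] }` (addition is entrywise). -/
def matchingMij (k : ℕ) (n m : Fin k → ℕ) (n1 i j : ℕ) :
    Finset (∀ l : Fin k, ZMod (m l) × ZMod (n l / m l)) :=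
  (Finset.range n1).image (fun x => xStar k n m x + baseEdge k n m i j)

/-! ### Auxiliary lemmas on mixed-radix representations -/

lemma MKP.digits_mod_eq (f : ℕ → ℕ) (b : ℕ) :
    ∀ t a (i i' : ℕ), b ≤ a + t →
      (∀ l, a ≤ l → l < b → (i / ∏ h ∈ Finset.Ico (l+1) b, f h) % f l
                         = (i' / ∏ h ∈ Finset.Ico (l+1) b, f h) % f l) →
      i % ∏ h ∈ Finset.Ico a b, f h = i' % ∏ h ∈ Finset.Ico a b, f h := by
  intro t
  induction t with
  | zero =>
    intro a i i' hb _
    rw [Finset.Ico_eq_empty (by omega)]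
    simp [Nat.mod_one]
  | succ t ih =>
    intro a i i' hb hdig
    by_cases hab : b ≤ a
    · rw [Finset.Ico_eq_empty (by omega)]; simp [Nat.mod_one]
    · push_neg at hab
      rw [Finset.prod_eq_prod_Ico_succ_bot hab, mul_comm, Nat.mod_mul, Nat.mod_mul,
        ih (a+1) i i' (by omega) (fun l hl hlb => hdig l (by omega) hlb),
        hdig a le_rfl hab]

lemma MKP.digits_exists (f : ℕ → ℕ) (b : ℕ) (hf : ∀ h, h < b → 1 ≤ f h) :
    ∀ t a (c : ℕ → ℕ), b ≤ a + t → (∀ l, a ≤ l → l < b → c l < f l) →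
      ∃ i, i < ∏ h ∈ Finset.Ico a b, f h ∧
        ∀ l, a ≤ l → l < b → (i / ∏ h ∈ Finset.Ico (l+1) b, f h) % f l = c l := by
  have hPpos : ∀ u, 0 < ∏ h ∈ Finset.Ico u b, f h := fun u =>
    Finset.prod_pos (fun h hh => hf h (Finset.mem_Ico.mp hh).2)
  intro t
  induction t with
  | zero =>
    intro a c hb _
    exact ⟨0, by rw [Finset.Ico_eq_empty (by omega)]; simp, fun l hl hlb => by omega⟩
  | succ t ih =>
    intro a c hb hc
    by_cases hab : b ≤ a
    · exact ⟨0, by rw [Finset.Ico_eq_empty (by omega)]; simp, fun l hl hlb => by omega⟩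
    · push_neg at hab
      obtain ⟨i', hi'lt, hi'dig⟩ := ih (a+1) c (by omega) (fun l hl hlb => hc l (by omega) hlb)
      refine ⟨c a * ∏ h ∈ Finset.Ico (a+1) b, f h + i', ?_, ?_⟩
      · rw [Finset.prod_eq_prod_Ico_succ_bot hab]
        calc c a * ∏ h ∈ Finset.Ico (a+1) b, f h + i'
            < c a * ∏ h ∈ Finset.Ico (a+1) b, f h + ∏ h ∈ Finset.Ico (a+1) b, f h := by omega
        _ = (c a + 1) * ∏ h ∈ Finset.Ico (a+1) b, f h := by ring
        _ ≤ f a * ∏ h ∈ Finset.Ico (a+1) b, f h := Nat.mul_le_mul_right _ (hc a le_rfl hab)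
      · intro l hl hlb
        rcases Nat.lt_or_ge a l with hal | hal
        · have hsplit : (∏ h ∈ Finset.Ico (a+1) (l+1), f h) * ∏ h ∈ Finset.Ico (l+1) b, f h
              = ∏ h ∈ Finset.Ico (a+1) b, f h :=
            Finset.prod_Ico_consecutive f (by omega) (by omega)
          obtain ⟨q, hq⟩ : f l ∣ ∏ h ∈ Finset.Ico (a+1) (l+1), f h :=
            Finset.dvd_prod_of_mem f (Finset.mem_Ico.mpr ⟨by omega, by omega⟩)
          have hrw : c a * (∏ h ∈ Finset.Ico (a+1) b, f h) + i'
              = i' + (c a * q * f l) * ∏ h ∈ Finset.Ico (l+1) b, f h := by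
            rw [← hsplit, hq]; ring
          rw [hrw, Nat.add_mul_div_right _ _ (hPpos (l+1)), Nat.add_mul_mod_self_right,
            hi'dig l (by omega) hlb]
        · have heq : l = a := by omega
          subst heq
          rw [mul_comm, Nat.mul_add_div (hPpos (l+1)), Nat.div_eq_of_lt hi'lt,
            Nat.add_zero, Nat.mod_eq_of_lt (hc l hl hlb)]

/-- Extension of a `Fin k`-indexed family to `ℕ`, by `1`. -/
def MKP.Fext (k : ℕ) (g : Fin k → ℕ) : ℕ → ℕ := fun t => if h : t < k then g ⟨t, h⟩ else 1

lemma MKP.prod_filter_lt_eq (k : ℕ) (g : Fin k → ℕ) (l : Fin k) :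
    (∏ h ∈ Finset.univ.filter (fun h : Fin k => l < h), g h)
      = ∏ h ∈ Finset.Ico ((l:ℕ)+1) k, MKP.Fext k g h := by
  refine Finset.prod_bij' (fun h _ => (h : ℕ)) (fun t ht => ⟨t, (Finset.mem_Ico.mp ht).2⟩)
    ?_ ?_ ?_ ?_ ?_
  · intro a ha
    simp only [Finset.mem_filter, Finset.mem_univ, true_and, Fin.lt_def] at ha
    simp only [Finset.mem_Ico]
    exact ⟨by omega, a.isLt⟩
  · intro a ha
    simp only [Finset.mem_filter, Finset.mem_univ, true_and, Fin.lt_def]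
    have := (Finset.mem_Ico.mp ha).1
    simpa using by omega
  · intro a ha; simp
  · intro a ha; simp
  · intro a ha; simp [MKP.Fext]

lemma MKP.prod_filter_ne_eq (k : ℕ) (g : Fin k → ℕ) :
    (∏ h ∈ Finset.univ.filter (fun h : Fin k => (h:ℕ) ≠ 0), g h)
      = ∏ h ∈ Finset.Ico 1 k, MKP.Fext k g h := by
  refine Finset.prod_bij' (fun h _ => (h : ℕ)) (fun t ht => ⟨t, (Finset.mem_Ico.mp ht).2⟩)
    ?_ ?_ ?_ ?_ ?_
  · intro a ha
    simp only [Finset.mem_filter, Finset.mem_univ, true_and] at ha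
    simp only [Finset.mem_Ico]
    exact ⟨by omega, a.isLt⟩
  · intro a ha
    simp only [Finset.mem_filter, Finset.mem_univ, true_and]
    have := (Finset.mem_Ico.mp ha).1
    simpa using by omega
  · intro a ha; simp
  · intro a ha; simp
  · intro a ha; simp [MKP.Fext]

/-- Claim: the sets `M_{i,j}` for `i ∈ [d]`, `j ∈ [N/d]` form a matching
decomposition of `K_{n_1,…,n_k}`: each has `n_1` edges, no two edges of one set
agree in any coordinate (share a vertex), and every edge lies in exactly one set. -/
theorem matchingMij_decomposition
    (k : ℕ) (hk : 2 ≤ k) (n m : Fin k → ℕ)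
    (hpos : ∀ i, 1 ≤ n i)
    (hmono : ∀ i j : Fin k, i ≤ j → n i ≤ n j)
    (hm0 : m ⟨0, by omega⟩ = n ⟨0, by omega⟩)
    (hdvd : ∀ i, m i ∣ n i)
    (N d : ℕ)
    (hN : N = ∏ i ∈ Finset.univ.filter (fun i : Fin k => (i : ℕ) ≠ 0), n i)
    (hd : d = ∏ i ∈ Finset.univ.filter (fun i : Fin k => (i : ℕ) ≠ 0), m i) :
    (∀ i j, i < d → j < N / d →
      (matchingMij k n m (n ⟨0, by omega⟩) i j).card = n ⟨0, by omega⟩) ∧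
    (∀ i j, i < d → j < N / d →
      ∀ e ∈ matchingMij k n m (n ⟨0, by omega⟩) i j,
      ∀ e' ∈ matchingMij k n m (n ⟨0, by omega⟩) i j,
        e ≠ e' → ∀ l : Fin k, e l ≠ e' l) ∧
    (∀ e : (∀ l : Fin k, ZMod (m l) × ZMod (n l / m l)),
      ∃! z : ℕ × ℕ, z.1 < d ∧ z.2 < N / d ∧
        e ∈ matchingMij k n m (n ⟨0, by omega⟩) z.1 z.2) := by
  have hk0 : 0 < k := by omega
  set l0 : Fin k := ⟨0, hk0⟩ with hl0def
  have hm0' : m l0 = n l0 := hm0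
  have hm_pos : ∀ l, 0 < m l := fun l => Nat.pos_of_dvd_of_pos (hdvd l) (hpos l)
  have hr_pos : ∀ l, 0 < n l / m l := fun l =>
    Nat.div_pos (Nat.le_of_dvd (hpos l) (hdvd l)) (hm_pos l)
  have hinstm : ∀ l : Fin k, NeZero (m l) := fun l => ⟨(hm_pos l).ne'⟩
  have hinstr : ∀ l : Fin k, NeZero (n l / m l) := fun l => ⟨(hr_pos l).ne'⟩
  have hr0 : n l0 / m l0 = 1 := by rw [hm0']; exact Nat.div_self (hpos _)
  -- injectivity of `x ↦ ⟨x*⟩ l` on `[n 0]`, for every coordinate `l`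
  have hxinj : ∀ x y : ℕ, x < n l0 → y < n l0 → ∀ l : Fin k,
      xStar k n m x l = xStar k n m y l → x = y := by
    intro x y hx hy l hl
    simp only [xStar] at hl
    have h1 := congrArg ZMod.val (congrArg Prod.fst hl)
    have h2 := congrArg ZMod.val (congrArg Prod.snd hl)
    simp only [ZMod.val_natCast] at h1 h2
    have h3 : x % ((n l / m l) * m l) = y % ((n l / m l) * m l) := by
      rw [Nat.mod_mul, Nat.mod_mul, h1, h2]
    rw [Nat.div_mul_cancel (hdvd l)] at h3
    have hle : n l0 ≤ n l := hmono l0 l (Fin.le_def.mpr (Nat.zero_le _))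
    rwa [Nat.mod_eq_of_lt (by omega), Nat.mod_eq_of_lt (by omega)] at h3
  -- membership characterization
  have hmem_iff : ∀ (i j : ℕ) (e : ∀ l : Fin k, ZMod (m l) × ZMod (n l / m l)),
      e ∈ matchingMij k n m (n l0) i j ↔
        ∃ x, x < n l0 ∧ xStar k n m x + baseEdge k n m i j = e := by
    intro i j e
    constructor
    · intro h
      rcases Finset.mem_image.mp h with ⟨x, hx, hfx⟩
      exact ⟨x, Finset.mem_range.mp hx, hfx⟩
    · rintro ⟨x, hx, hfx⟩
      exact Finset.mem_image.mpr ⟨x, Finset.mem_range.mpr hx, hfx⟩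
  have hB0 : ∀ i j, baseEdge k n m i j l0 = (0, 0) := by
    intro i j; simp [baseEdge, hl0def]
  -- products over Ico
  have hdprod : d = ∏ h ∈ Finset.Ico 1 k, MKP.Fext k m h := by
    rw [hd, MKP.prod_filter_ne_eq]
  have hNprod : N = ∏ h ∈ Finset.Ico 1 k, MKP.Fext k n h := by
    rw [hN, MKP.prod_filter_ne_eq]
  have hdpos : 0 < d := by
    rw [hd]; exact Finset.prod_pos fun l _ => hm_pos l
  have hNd : N / d = ∏ h ∈ Finset.Ico 1 k, MKP.Fext k (fun l => n l / m l) h := by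
    refine Nat.div_eq_of_eq_mul_left hdpos ?_
    rw [hNprod, hdprod, ← Finset.prod_mul_distrib]
    refine Finset.prod_congr rfl ?_
    intro t ht
    have htk : t < k := (Finset.mem_Ico.mp ht).2
    simp only [MKP.Fext, dif_pos htk]
    exact (Nat.div_mul_cancel (hdvd _)).symm
  have hfm : ∀ h, h < k → 1 ≤ MKP.Fext k m h := by
    intro h hh; simp only [MKP.Fext, dif_pos hh]; exact hm_pos _
  have hfr : ∀ h, h < k → 1 ≤ MKP.Fext k (fun l => n l / m l) h := by
    intro h hh; simp only [MKP.Fext, dif_pos hh]; exact hr_pos _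
  -- Part 1
  have P1 : ∀ i j : ℕ, (matchingMij k n m (n l0) i j).card = n l0 := by
    intro i j
    have hinj : Set.InjOn (fun x => xStar k n m x + baseEdge k n m i j)
        (Finset.range (n l0)) := by
      intro x hx y hy hxy
      simp only [Finset.coe_range, Set.mem_Iio] at hx hy
      refine hxinj x y hx hy l0 ?_
      have h := congrFun hxy l0
      dsimp only at h
      rw [Pi.add_apply, Pi.add_apply] at h
      exact add_right_cancel h
    simp only [matchingMij]
    rw [Finset.card_image_of_injOn hinj, Finset.card_range]
  -- Part 2
  have P2 : ∀ i j : ℕ,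
      ∀ e ∈ matchingMij k n m (n l0) i j, ∀ e' ∈ matchingMij k n m (n l0) i j,
        e ≠ e' → ∀ l : Fin k, e l ≠ e' l := by
    intro i j e he e' he' hne l hl
    obtain ⟨x, hx, rfl⟩ := (hmem_iff i j e).mp he
    obtain ⟨y, hy, rfl⟩ := (hmem_iff i j e').mp he'
    apply hne
    rw [Pi.add_apply, Pi.add_apply] at hl
    rw [hxinj x y hx hy l (by exact add_right_cancel hl)]
  -- Part 3
  have P3 : ∀ e : (∀ l : Fin k, ZMod (m l) × ZMod (n l / m l)),
      ∃! z : ℕ × ℕ, z.1 < d ∧ z.2 < N / d ∧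
        e ∈ matchingMij k n m (n l0) z.1 z.2 := by
    intro e
    haveI := hinstm l0
    set x : ℕ := ((e l0).1).val with hxdef
    have hx : x < n l0 := by rw [← hm0']; exact ZMod.val_lt _
    -- digits for i
    have hci : ∀ l, 1 ≤ l → l < k →
        (if h : l < k then ((e ⟨l,h⟩).1 - (xStar k n m x ⟨l,h⟩).1).val else 0)
          < MKP.Fext k m l := by
      intro l h1 hlb
      haveI := hinstm ⟨l, hlb⟩
      simp only [dif_pos hlb, MKP.Fext]
      exact ZMod.val_lt _
    obtain ⟨i, hilt, hidig⟩ := MKP.digits_exists (MKP.Fext k m) k hfm k 1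
      (fun t => if h : t < k then ((e ⟨t,h⟩).1 - (xStar k n m x ⟨t,h⟩).1).val else 0)
      (by omega) hci
    have hcj : ∀ l, 1 ≤ l → l < k →
        (if h : l < k then ((e ⟨l,h⟩).2 - (xStar k n m x ⟨l,h⟩).2).val else 0)
          < MKP.Fext k (fun l => n l / m l) l := by
      intro l h1 hlb
      haveI := hinstr ⟨l, hlb⟩
      simp only [dif_pos hlb, MKP.Fext]
      exact ZMod.val_lt _
    obtain ⟨j, hjlt, hjdig⟩ := MKP.digits_exists (MKP.Fext k (fun l => n l / m l)) k hfr k 1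
      (fun t => if h : t < k then ((e ⟨t,h⟩).2 - (xStar k n m x ⟨t,h⟩).2).val else 0)
      (by omega) hcj
    rw [← hdprod] at hilt
    rw [← hNd] at hjlt
    -- identification of the base edge
    have hbasei : ∀ l : Fin k, (l:ℕ) ≠ 0 → baseEdge k n m i j l
        = ((e l).1 - (xStar k n m x l).1, (e l).2 - (xStar k n m x l).2) := by
      intro l hl
      simp only [baseEdge, if_neg hl]
      have hdl := hidig (l:ℕ) (by omega) l.isLt
      have hdl' := hjdig (l:ℕ) (by omega) l.isLt
      simp only [dif_pos l.isLt, Fin.eta] at hdl hdl'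
      have hFm : MKP.Fext k m (l:ℕ) = m l := by simp [MKP.Fext, l.isLt]
      have hFr : MKP.Fext k (fun l => n l / m l) (l:ℕ) = n l / m l := by
        simp [MKP.Fext, l.isLt]
      rw [hFm] at hdl
      rw [hFr] at hdl'
      haveI := hinstm l
      haveI := hinstr l
      refine Prod.ext ?_ ?_
      · show ((i / ∏ h ∈ Finset.univ.filter (fun h : Fin k => l < h), m h : ℕ) : ZMod (m l))
          = (e l).1 - (xStar k n m x l).1
        rw [MKP.prod_filter_lt_eq k m l, ← ZMod.natCast_mod, hdl]
        simp [ZMod.natCast_val, ZMod.cast_id]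
      · show ((j / ∏ h ∈ Finset.univ.filter (fun h : Fin k => l < h), (n h / m h) : ℕ)
            : ZMod (n l / m l)) = (e l).2 - (xStar k n m x l).2
        rw [MKP.prod_filter_lt_eq k (fun l => n l / m l) l, ← ZMod.natCast_mod, hdl']
        simp [ZMod.natCast_val, ZMod.cast_id]
    have hmem : e ∈ matchingMij k n m (n l0) i j := by
      refine (hmem_iff i j e).mpr ⟨x, hx, ?_⟩
      funext l
      rw [Pi.add_apply]
      by_cases hl : (l:ℕ) = 0
      · have hll : l = l0 := Fin.ext hl
        subst hll
        rw [hB0, Prod.mk_zero_zero, add_zero]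
        refine Prod.ext ?_ ?_
        · show ((x / (n l0 / m l0) : ℕ) : ZMod (m l0)) = (e l0).1
          have hx1 : x / (n l0 / m l0) = x := by rw [hr0, Nat.div_one]
          rw [hx1, hxdef]
          simp [ZMod.natCast_val, ZMod.cast_id]
        · have hsub : Subsingleton (ZMod (n l0 / m l0)) := by rw [hr0]; infer_instance
          exact hsub.elim _ _
      · rw [hbasei l hl]
        refine Prod.ext ?_ ?_
        · rw [Prod.fst_add]; ring
        · rw [Prod.snd_add]; ring
    -- uniqueness
    have huni : ∀ i1 j1 : ℕ, i1 < d → j1 < N / d →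
        e ∈ matchingMij k n m (n l0) i1 j1 → (i1, j1) = (i, j) := by
      intro i1 j1 h1 h2 hmem1
      obtain ⟨x1, hx1, heq1⟩ := (hmem_iff i1 j1 e).mp hmem1
      obtain ⟨x2, hx2, heq2⟩ := (hmem_iff i j e).mp hmem
      have hfun := heq1.trans heq2.symm
      have hx12 : x1 = x2 := by
        refine hxinj x1 x2 hx1 hx2 l0 ?_
        have := congrFun hfun l0
        rw [Pi.add_apply, Pi.add_apply, hB0, hB0] at this
        simpa using this
      subst hx12
      have hbeq : ∀ l : Fin k, baseEdge k n m i1 j1 l = baseEdge k n m i j l := by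
        intro l
        have := congrFun hfun l
        rw [Pi.add_apply, Pi.add_apply] at this
        exact add_left_cancel this
      have hieq : i1 = i := by
        have hmod := MKP.digits_mod_eq (MKP.Fext k m) k k 1 i1 i (by omega) ?_
        · rwa [Nat.mod_eq_of_lt (by rw [← hdprod]; exact h1),
            Nat.mod_eq_of_lt (by rw [← hdprod]; exact hilt)] at hmod
        · intro l hl hlb
          have hl0' : ((⟨l, hlb⟩ : Fin k) : ℕ) ≠ 0 := by simpa using by omega
          have hb := hbeq ⟨l, hlb⟩
          simp only [baseEdge, if_neg hl0'] at hb
          have hfst := congrArg ZMod.val (congrArg Prod.fst hb)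
          simp only [ZMod.val_natCast] at hfst
          rw [MKP.prod_filter_lt_eq k m ⟨l, hlb⟩] at hfst
          simpa [MKP.Fext, dif_pos hlb] using hfst
      have hjeq : j1 = j := by
        have hmod := MKP.digits_mod_eq (MKP.Fext k (fun l => n l / m l)) k k 1 j1 j (by omega) ?_
        · rwa [Nat.mod_eq_of_lt (by rw [← hNd]; exact h2),
            Nat.mod_eq_of_lt (by rw [← hNd]; exact hjlt)] at hmod
        · intro l hl hlb
          have hl0' : ((⟨l, hlb⟩ : Fin k) : ℕ) ≠ 0 := by simpa using by omega
          have hb := hbeq ⟨l, hlb⟩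
          simp only [baseEdge, if_neg hl0'] at hb
          have hsnd := congrArg ZMod.val (congrArg Prod.snd hb)
          simp only [ZMod.val_natCast] at hsnd
          rw [MKP.prod_filter_lt_eq k (fun l => n l / m l) ⟨l, hlb⟩] at hsnd
          simpa [MKP.Fext, dif_pos hlb] using hsnd
      rw [hieq, hjeq]
    refine ⟨(i, j), ⟨hilt, hjlt, hmem⟩, ?_⟩
    rintro ⟨i1, j1⟩ ⟨h1, h2, h3⟩
    exact huni i1 j1 h1 h2 h3
  exact ⟨fun i j _ _ => P1 i j, fun i j hi hj => P2 i j, P3⟩
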